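/- If the connected graph G has r independent cycles (i.e., r = |E| - |V| + 1, where |E| and |V| are the numbers of edges and vertices of G), then for any set S of edges of G and any two states i, j, |∑_{{m,n}∈S} ∂ ln(π_i/π_j) / ∂B_mn| ≤ r · tanh(F_{i↔j}/4). -/

import Mathlib

open Finset

attribute [local instance] Classical.propDecidable

/-- The transition graph of a rate matrix: an edge between `i ≠ j` whenever
both rates are positive. -/
def transGraph {V : Type*} (W : V → V → ℝ) : SimpleGraph V where
  Adj i j := i ≠ j ∧ 0 < W i j ∧ 0 < W j i
  symm := ⟨fun i j ⟨h, h1, h2⟩ => ⟨h.symm, h2, h1⟩⟩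
  loopless := ⟨fun i ⟨h, _, _⟩ => h rfl⟩

/-- `T` is a spanning tree of `G`. -/
def IsSpanningTree {V : Type*} (G T : SimpleGraph V) : Prop := T ≤ G ∧ T.IsTree

/-- Weight of spanning tree `T` rooted at `r`: product over the edges of `T`,
each directed towards `r`, of the corresponding rate (`W i j` is the rate of
the jump `j → i`). -/
noncomputable def treeWeight {V : Type*} [Fintype V] (W : V → V → ℝ)
    (T : SimpleGraph V) (r : V) : ℝ :=
  ∏ p ∈ Finset.univ.filter
      (fun p : V × V => T.Adj p.1 p.2 ∧ T.dist p.2 r + 1 = T.dist p.1 r),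
    W p.2 p.1

/-- Sum of rooted-tree weights over all spanning trees of `G`, rooted at `k`. -/
noncomputable def sumTrees {V : Type*} [Fintype V] [DecidableEq V] (W : V → V → ℝ)
    (G : SimpleGraph V) (k : V) : ℝ :=
  ∑ T ∈ Finset.univ.filter (fun T : SimpleGraph V => IsSpanningTree G T),
    treeWeight W T k

/-- Steady state via matrix-tree formula. -/
noncomputable def mttPi {V : Type*} [Fintype V] [DecidableEq V] (W : V → V → ℝ)
    (G : SimpleGraph V) (k : V) : ℝ :=
  sumTrees W G k / ∑ l : V, sumTrees W G l

/-- Weight of a walk: product of the rates of its directed edges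
(a step `a → b` has rate `W b a`). -/
noncomputable def walkWeight {V : Type*} (W : V → V → ℝ) {G : SimpleGraph V} {u v : V}
    (p : G.Walk u v) : ℝ :=
  (p.darts.map (fun d => W d.snd d.fst)).prod

/-- Cycle force of a closed walk. -/
noncomputable def cycleForce {V : Type*} (W : V → V → ℝ) {G : SimpleGraph V} {u : V}
    (p : G.Walk u u) : ℝ :=
  Real.log (walkWeight W p / walkWeight W p.reverse)

/-- `Fmax`: the maximum of `|F_C|` over cycles `C` of `G` containing the
edge `{m,n}`; `0` if there is none. -/
noncomputable def Fmax {V : Type*} (W : V → V → ℝ) (G : SimpleGraph V) (m n : V) : ℝ :=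
  sSup {x : ℝ | ∃ (u : V) (p : G.Walk u u), p.IsCycle ∧ s(m, n) ∈ p.edges ∧
    x = |cycleForce W p|}

/-- `F_{i↔j}`: the maximum entropy produced going from `i` to `j` and back
along non-self-intersecting paths. -/
noncomputable def Fbtw {V : Type*} (W : V → V → ℝ) (G : SimpleGraph V) (i j : V) : ℝ :=
  sSup {x : ℝ | ∃ (p : G.Walk i j) (q : G.Walk j i), p.IsPath ∧ q.IsPath ∧
    x = |Real.log (walkWeight W p * walkWeight W q /
          (walkWeight W p.reverse * walkWeight W q.reverse))|}

/-- The parameterized rates `W_ij = exp(-(B_ij - E_j - F_ij/2))` on the edges of `G`. -/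
noncomputable def rates {V : Type*} (G : SimpleGraph V) (Bp : V → V → ℝ) (Ep : V → ℝ)
    (Fp : V → V → ℝ) : V → V → ℝ :=
  fun i j => if G.Adj i j then Real.exp (-(Bp i j - Ep j - Fp i j / 2)) else 0

/-- Steady state as a function of the parameters. -/
noncomputable def piP {V : Type*} [Fintype V] [DecidableEq V] (G : SimpleGraph V)
    (Bp : V → V → ℝ) (Ep : V → ℝ) (Fp : V → V → ℝ) (k : V) : ℝ :=
  mttPi (rates G Bp Ep Fp) G k

/-- Replace the symmetric edge parameter of the edge `{m,n}` by `t`. -/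
noncomputable def updB {V : Type*} (Bp : V → V → ℝ) (m n : V) (t : ℝ) : V → V → ℝ :=
  fun i j => if (i = m ∧ j = n) ∨ (i = n ∧ j = m) then t else Bp i j

/-- Add `t` to the symmetric edge parameters of all edges in `S`. -/
noncomputable def updBadd {V : Type*} (Bp : V → V → ℝ) (S : Set (Sym2 V)) (t : ℝ) : V → V → ℝ :=
  fun i j => if s(i, j) ∈ S then Bp i j + t else Bp i j

/-- Replace the antisymmetric edge parameter of the edge `{i,j}` by `t`
(and by `-t` in the reverse direction). -/
noncomputable def updF {V : Type*} (Fp : V → V → ℝ) (i j : V) (t : ℝ) : V → V → ℝ :=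
  fun a b => if a = i ∧ b = j then t else if a = j ∧ b = i then -t else Fp a b

/-- The full rate matrix, with diagonal entries fixed by conservation of probability. -/
noncomputable def fullW {V : Type*} [Fintype V] [DecidableEq V] (W : V → V → ℝ) :
    V → V → ℝ :=
  fun i j => if i = j then -∑ l ∈ Finset.univ.filter (fun l => l ≠ j), W l j else W i j

/-! Adding `t` to `B` on the edges of `S` multiplies the weight of every rooted spanning tree `T`
by `exp (-t m_T)`, where `m_T` is the number of edges of `T` in `S`. So the derivative of
`ln (π_i / π_j)` at `0` is the difference of the means of `m_T` over the spanning trees, weighted by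
`w(T_j)` and by `w(T_i)`. A spanning tree has `|V| - 1` edges, so `m_T` ranges over an interval of
length `r`. Rerooting `T` from `i` to `j` along its tree path `P` gives
`w(T_i) w(P) = w(T_j) w(P*)`, so the ratios `w(T_i) / w(T_j)` of two spanning trees differ by the
cycle weight ratio of a path from `i` to `j` and one back, hence by a factor at most
`exp F_{i↔j}`. Two probability vectors whose likelihood ratio varies by a factor at most `exp F`
are at total variation distance at most `tanh (F / 4)`, and the means of a quantity ranging over
an interval of length `r` then differ by at most `r tanh (F / 4)`. -/

open Real

section WeightedMeans

variable {ι : Type*}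

/-- Here `tanh (M / 4) = (c - 1) / (c + 1)` with `c = exp (M / 2)`; the bound is attained at
`β = 1 / (c + 1)`. -/
theorem sub_le_tanh_of_odds_le {α β M : ℝ} (hM : 0 ≤ M) (hβ : 0 ≤ β)
    (h : α * (1 - β) ≤ exp M * (β * (1 - α))) :
    α - β ≤ tanh (M / 4) := by
  set c := exp (M / 4) ^ 2 with hc_def
  have hc : 1 ≤ c := one_le_pow₀ (one_le_exp (by linarith))
  have hexp : exp M = c ^ 2 := by
    rw [hc_def, ← pow_mul, ← exp_nat_mul]
    congr 1
    ring
  have htanh : tanh (M / 4) = (c - 1) / (c + 1) := by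
    rw [tanh_eq, exp_neg, hc_def]
    field_simp
  rw [hexp] at h
  rw [htanh, le_div_iff₀ (by linarith)]
  have hD : 0 < 1 - β + c ^ 2 * β := by nlinarith [one_le_pow₀ (n := 2) hc]
  -- With `D = 1 - β + c ^ 2 * β`, `h` reads `(α - β) * D ≤ β * (1 - β) * (c ^ 2 - 1)`, and
  -- `D - (c + 1) ^ 2 * β * (1 - β) = ((c + 1) * β - 1) ^ 2`.
  nlinarith [mul_nonneg (sub_nonneg.2 hc) (sq_nonneg ((c + 1) * β - 1)),
    mul_le_mul_of_nonneg_left h (by linarith : (0 : ℝ) ≤ c + 1)]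

theorem sum_sub_sum_le_tanh {s U : Finset ι} (hU : U ⊆ s) {p q : ι → ℝ} {M : ℝ} (hM : 0 ≤ M)
    (hq : ∀ T ∈ s, 0 ≤ q T) (hp₁ : ∑ T ∈ s, p T = 1) (hq₁ : ∑ T ∈ s, q T = 1)
    (hpq : ∀ T ∈ s, ∀ T' ∈ s, p T * q T' ≤ exp M * (q T * p T')) :
    ∑ T ∈ U, p T - ∑ T ∈ U, q T ≤ tanh (M / 4) := by
  have hcompl (f : ι → ℝ) (hf : ∑ T ∈ s, f T = 1) :
      1 - ∑ T ∈ U, f T = ∑ T ∈ s \ U, f T := by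
    rw [← hf, ← sum_sdiff hU]
    ring
  apply sub_le_tanh_of_odds_le hM (sum_nonneg fun T hT => hq T (hU hT))
  rw [hcompl q hq₁, hcompl p hp₁, sum_mul_sum, sum_mul_sum, mul_sum]
  refine sum_le_sum fun T hT => ?_
  rw [mul_sum]
  exact sum_le_sum fun T' hT' => hpq T (hU hT) T' (sdiff_subset hT')

theorem sum_sub_mul_le_tanh {s : Finset ι} {p q n : ι → ℝ} {lo R M : ℝ} (hM : 0 ≤ M)
    (hR : 0 ≤ R) (hq : ∀ T ∈ s, 0 ≤ q T) (hp₁ : ∑ T ∈ s, p T = 1) (hq₁ : ∑ T ∈ s, q T = 1)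
    (hpq : ∀ T ∈ s, ∀ T' ∈ s, p T * q T' ≤ exp M * (q T * p T'))
    (hn : ∀ T ∈ s, lo ≤ n T ∧ n T ≤ lo + R) :
    ∑ T ∈ s, (p T - q T) * n T ≤ R * tanh (M / 4) := by
  set U := s.filter fun T => q T < p T
  have hshift : ∑ T ∈ s, (p T - q T) * n T = ∑ T ∈ s, (p T - q T) * (n T - lo) := by
    simp only [mul_sub, sum_sub_distrib, ← sum_mul, hp₁, hq₁, sub_self, zero_mul, sub_zero]
  calc ∑ T ∈ s, (p T - q T) * n T
      ≤ ∑ T ∈ s, if q T < p T then (p T - q T) * R else 0 := by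
        rw [hshift]
        refine sum_le_sum fun T hT => ?_
        obtain ⟨hlo, hhi⟩ := hn T hT
        split_ifs with h
        · exact mul_le_mul_of_nonneg_left (by linarith) (by linarith)
        · exact mul_nonpos_of_nonpos_of_nonneg (by linarith) (by linarith)
    _ = R * (∑ T ∈ U, p T - ∑ T ∈ U, q T) := by
        rw [← sum_filter, ← sum_sub_distrib, mul_sum]
        exact sum_congr rfl fun _ _ => mul_comm _ _
    _ ≤ R * tanh (M / 4) :=
        mul_le_mul_of_nonneg_left
          (sum_sub_sum_le_tanh (filter_subset _ s) hM hq hp₁ hq₁ hpq) hR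

theorem abs_sum_div_sub_sum_div_le {s : Finset ι} (hs : s.Nonempty) {a b n : ι → ℝ}
    {lo R M : ℝ} (ha : ∀ T ∈ s, 0 < a T) (hb : ∀ T ∈ s, 0 < b T)
    (hab : ∀ T ∈ s, ∀ T' ∈ s, a T * b T' ≤ exp M * (a T' * b T))
    (hn : ∀ T ∈ s, lo ≤ n T ∧ n T ≤ lo + R) :
    |(∑ T ∈ s, b T * n T) / ∑ T ∈ s, b T - (∑ T ∈ s, a T * n T) / ∑ T ∈ s, a T|
      ≤ R * tanh (M / 4) := by
  obtain ⟨T₀, hT₀⟩ := hs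
  have hM : 0 ≤ M := by
    have h : 1 * (a T₀ * b T₀) ≤ exp M * (a T₀ * b T₀) := by
      simpa using hab T₀ hT₀ T₀ hT₀
    exact one_le_exp_iff.1 (le_of_mul_le_mul_right h (mul_pos (ha T₀ hT₀) (hb T₀ hT₀)))
  have hR : 0 ≤ R := by linarith [hn T₀ hT₀]
  have hA : 0 < ∑ T ∈ s, a T := sum_pos ha ⟨T₀, hT₀⟩
  have hB : 0 < ∑ T ∈ s, b T := sum_pos hb ⟨T₀, hT₀⟩
  set p := fun T => b T / ∑ T ∈ s, b T
  set q := fun T => a T / ∑ T ∈ s, a T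
  have hp : ∀ T ∈ s, 0 ≤ p T := fun T hT => div_nonneg (hb T hT).le hB.le
  have hq : ∀ T ∈ s, 0 ≤ q T := fun T hT => div_nonneg (ha T hT).le hA.le
  have hp₁ : ∑ T ∈ s, p T = 1 := by rw [← sum_div, div_self hB.ne']
  have hq₁ : ∑ T ∈ s, q T = 1 := by rw [← sum_div, div_self hA.ne']
  have hpq : ∀ T ∈ s, ∀ T' ∈ s, p T * q T' ≤ exp M * (q T * p T') := by
    intro T hT T' hT'
    calc p T * q T' = b T * a T' / ((∑ T ∈ s, b T) * ∑ T ∈ s, a T) := by ring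
      _ ≤ exp M * (a T * b T') / ((∑ T ∈ s, b T) * ∑ T ∈ s, a T) :=
        div_le_div_of_nonneg_right (by linarith [hab T' hT' T hT]) (by positivity)
      _ = exp M * (q T * p T') := by ring
  have hdiff : (∑ T ∈ s, b T * n T) / ∑ T ∈ s, b T - (∑ T ∈ s, a T * n T) / ∑ T ∈ s, a T
      = ∑ T ∈ s, (p T - q T) * n T := by
    simp only [p, q, sum_div, ← sum_sub_distrib]
    exact sum_congr rfl fun T _ => by ring
  have hswap : ∑ T ∈ s, (q T - p T) * n T = -∑ T ∈ s, (p T - q T) * n T := by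
    rw [← sum_neg_distrib]
    exact sum_congr rfl fun _ _ => by ring
  have hqp := sum_sub_mul_le_tanh hM hR hp hq₁ hp₁
    (fun T hT T' hT' => by linarith [hpq T' hT' T hT, mul_comm (q T) (p T')]) hn
  rw [hdiff, abs_le]
  exact ⟨by linarith, sum_sub_mul_le_tanh hM hR hq hp₁ hq₁ hpq hn⟩

theorem hasDerivAt_log_sum_exp_mul {s : Finset ι} (hs : s.Nonempty) {c m : ι → ℝ}
    (hc : ∀ T ∈ s, 0 < c T) :
    HasDerivAt (fun t => log (∑ T ∈ s, exp (-(t * m T)) * c T))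
      (-(∑ T ∈ s, c T * m T) / ∑ T ∈ s, c T) 0 := by
  have hterm : ∀ T ∈ s, HasDerivAt (fun t => exp (-(t * m T)) * c T) (-(c T * m T)) 0 := by
    intro T _
    have h := (((hasDerivAt_id' 0).mul_const (m T)).fun_neg.exp).mul_const (c T)
    simp only [zero_mul, neg_zero, exp_zero, one_mul] at h
    exact h.congr_deriv (by ring)
  convert (HasDerivAt.fun_sum hterm).log (by simpa using (sum_pos hc hs).ne') using 1
  simp [sum_neg_distrib]

end WeightedMeans

section WalkWeights

open SimpleGraph

variable {V : Type*} {T : SimpleGraph V}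

@[simp]
theorem walkWeight_nil (W : V → V → ℝ) {u : V} : walkWeight W (Walk.nil : T.Walk u u) = 1 := by
  simp [walkWeight]

@[simp]
theorem walkWeight_cons (W : V → V → ℝ) {u v w : V} (h : T.Adj u v) (p : T.Walk v w) :
    walkWeight W (Walk.cons h p) = W v u * walkWeight W p := by
  simp [walkWeight]

@[simp]
theorem walkWeight_append (W : V → V → ℝ) {u v w : V} (p : T.Walk u v) (q : T.Walk v w) :
    walkWeight W (p.append q) = walkWeight W p * walkWeight W q := by
  simp [walkWeight, Walk.darts_append]

@[simp]
theorem walkWeight_mapLe (W : V → V → ℝ) {G : SimpleGraph V} (h : T ≤ G) {u v : V}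
    (p : T.Walk u v) : walkWeight W (p.mapLe h) = walkWeight W p := by
  simp [walkWeight, Walk.darts_map, Function.comp_def]

theorem walkWeight_pos {W : V → V → ℝ} (hW : ∀ a b, T.Adj a b → 0 < W a b) {u v : V}
    (p : T.Walk u v) : 0 < walkWeight W p := by
  induction p with
  | nil => simp
  | cons h _ ih => simpa using mul_pos (hW _ _ h.symm) ih

end WalkWeights

namespace SimpleGraph.IsTree

variable {V : Type*} {T : SimpleGraph V}

theorem length_eq_dist (hT : T.IsTree) {u v : V} {p : T.Walk u v} (hp : p.IsPath) :
    p.length = T.dist u v := by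
  obtain ⟨q, hq⟩ := hT.connected.exists_walk_length_eq_dist u v
  have hpq := (hT.isAcyclic.subsingleton_path u v).elim ⟨p, hp⟩
    ⟨q, q.isPath_of_length_eq_dist hq⟩
  rw [← hq]
  exact congrArg (fun x : T.Path u v => x.1.length) hpq

theorem dist_add_one_of_mem_support [DecidableEq V] (hT : T.IsTree) {a b x : V}
    (hab : T.Adj a b) {p : T.Walk x a} (hp : p.IsPath) (hb : b ∈ p.support) :
    T.dist x b + 1 = T.dist x a := by
  have h := congrArg Walk.length (p.take_spec hb)
  rwa [Walk.length_append, hT.length_eq_dist (hp.takeUntil hb),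
    hT.length_eq_dist (hp.dropUntil hb), hT.length_eq_dist hp,
    dist_eq_one_iff_adj.2 hab.symm] at h

theorem dist_eq_add_one_of_notMem_support (hT : T.IsTree) {a b x : V} (hab : T.Adj a b)
    {p : T.Walk x a} (hp : p.IsPath) (hb : b ∉ p.support) :
    T.dist x b = T.dist x a + 1 := by
  rw [← hT.length_eq_dist (hp.concat hb hab), Walk.length_concat, hT.length_eq_dist hp]

theorem dist_eq_add_one_or_of_adj [DecidableEq V] (hT : T.IsTree) {u v : V} (huv : T.Adj u v)
    (r : V) : T.dist u r = T.dist v r + 1 ∨ T.dist v r = T.dist u r + 1 := by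
  obtain ⟨p, hp, -⟩ := hT.connected.exists_path_of_dist r u
  rw [dist_comm, dist_comm (u := v)]
  by_cases hv : v ∈ p.support
  · exact Or.inl (hT.dist_add_one_of_mem_support huv hp hv).symm
  · exact Or.inr (hT.dist_eq_add_one_of_notMem_support huv hp hv)

/-- Orienting an edge `{u, v}` of a tree towards a vertex gives the same result for both ends
of any other edge `{a, b}`. -/
theorem dist_eq_add_one_of_adj_of_ne [DecidableEq V] (hT : T.IsTree) {a b u v : V}
    (hab : T.Adj a b) (huv : T.Adj u v) (hne : s(u, v) ≠ s(a, b))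
    (hu : T.dist u a = T.dist v a + 1) : T.dist u b = T.dist v b + 1 := by
  obtain ⟨P, hP⟩ := hT.connected.exists_walk_length_eq_dist v a
  have hQ : (Walk.cons huv P).IsPath := Walk.isPath_of_length_eq_dist _ (by simp [hP, hu])
  by_cases hbP : b ∈ P.support
  · have h₁ := hT.dist_add_one_of_mem_support hab hQ (by simp [hbP])
    have h₂ := hT.dist_add_one_of_mem_support hab hQ.of_cons hbP
    omega
  have h₂ := hT.dist_eq_add_one_of_notMem_support hab hQ.of_cons hbP
  by_cases hbu : b = u
  · subst hbu
    rw [dist_eq_one_iff_adj.2 huv.symm] at h₂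
    have hva : v = a := hT.connected.dist_eq_zero_iff.1 (by omega)
    exact absurd (by rw [hva, Sym2.eq_swap]) hne
  · have h₁ := hT.dist_eq_add_one_of_notMem_support hab hQ (by simp [hbP, hbu])
    omega

end SimpleGraph.IsTree

section TreeWeights

open SimpleGraph

variable {V : Type*} [Fintype V] {T : SimpleGraph V}

noncomputable def rootward (T : SimpleGraph V) (r : V) : Finset (V × V) :=
  Finset.univ.filter (fun p : V × V => T.Adj p.1 p.2 ∧ T.dist p.2 r + 1 = T.dist p.1 r)

theorem mem_rootward {r : V} {p : V × V} :
    p ∈ rootward T r ↔ T.Adj p.1 p.2 ∧ T.dist p.2 r + 1 = T.dist p.1 r := by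
  simp [rootward]

theorem treeWeight_eq_prod_rootward (W : V → V → ℝ) (r : V) :
    treeWeight W T r = ∏ p ∈ rootward T r, W p.2 p.1 := rfl

theorem rootward_of_adj [DecidableEq V] (hT : T.IsTree) {a b : V} (hab : T.Adj a b) :
    rootward T a = insert (b, a) ((rootward T b).erase (a, b)) := by
  ext ⟨u, v⟩
  simp only [mem_rootward, mem_insert, mem_erase, Prod.mk.injEq, ne_eq]
  by_cases he : s(u, v) = s(a, b)
  · rcases Sym2.eq_iff.1 he with ⟨rfl, rfl⟩ | ⟨rfl, rfl⟩
    · simp [hab.ne]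
    · simp [hab.symm, dist_eq_one_iff_adj.2 hab.symm]
  · have he' : s(u, v) ≠ s(b, a) := fun h => he (h.trans Sym2.eq_swap)
    constructor
    · rintro ⟨huv, h⟩
      refine Or.inr ⟨fun ⟨hua, hvb⟩ => he (by rw [hua, hvb]), huv, ?_⟩
      exact (hT.dist_eq_add_one_of_adj_of_ne hab huv he h.symm).symm
    · rintro (⟨rfl, rfl⟩ | ⟨-, huv, h⟩)
      · exact absurd rfl he'
      · exact ⟨huv, (hT.dist_eq_add_one_of_adj_of_ne hab.symm huv he' h.symm).symm⟩

theorem treeWeight_mul_of_adj [DecidableEq V] (W : V → V → ℝ) (hT : T.IsTree) {a b : V}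
    (hab : T.Adj a b) : treeWeight W T a * W b a = treeWeight W T b * W a b := by
  have hba : (b, a) ∉ (rootward T b).erase (a, b) := by simp [mem_rootward]
  have hab' : (a, b) ∈ rootward T b := by simp [mem_rootward, hab, dist_eq_one_iff_adj.2 hab]
  rw [treeWeight_eq_prod_rootward, treeWeight_eq_prod_rootward, rootward_of_adj hT hab,
    prod_insert hba, ← mul_prod_erase _ _ hab']
  ring

theorem treeWeight_pos {W : V → V → ℝ} (hW : ∀ a b, T.Adj a b → 0 < W a b) (r : V) :
    0 < treeWeight W T r :=
  prod_pos fun _ hp => hW _ _ (mem_rootward.1 hp).1.symm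

theorem treeWeight_mul_walkWeight [DecidableEq V] (W : V → V → ℝ) (hT : T.IsTree) {c d : V}
    (p : T.Walk c d) :
    treeWeight W T c * walkWeight W p = treeWeight W T d * walkWeight W p.reverse := by
  induction p with
  | nil => simp
  | @cons u v w h q ih =>
    simp only [walkWeight_cons, Walk.reverse_cons, walkWeight_append, walkWeight_nil]
    linear_combination walkWeight W q * treeWeight_mul_of_adj W hT h + W u v * ih

theorem prod_rootward_eq_prod_edgeFinset [DecidableEq V] {M : Type*} [CommMonoid M]
    (hT : T.IsTree) (r : V) (f : Sym2 V → M) :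
    ∏ p ∈ rootward T r, f s(p.1, p.2) = ∏ e ∈ T.edgeFinset, f e := by
  refine prod_nbij (fun p => s(p.1, p.2)) (fun p hp => ?_) ?_ ?_ fun _ _ => rfl
  · simpa using (mem_rootward.1 hp).1
  · rintro ⟨u, v⟩ huv ⟨u', v'⟩ huv' he
    rcases Sym2.eq_iff.1 he with ⟨rfl, rfl⟩ | ⟨rfl, rfl⟩
    · rfl
    · have h₁ := (mem_rootward.1 huv).2
      have h₂ := (mem_rootward.1 huv').2
      dsimp only at h₁ h₂
      omega
  · intro e he
    induction e using Sym2.ind with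
    | h u v =>
      have huv : T.Adj u v := by simpa using he
      rcases hT.dist_eq_add_one_or_of_adj huv r with h | h
      · exact ⟨(u, v), mem_rootward.2 ⟨huv, h.symm⟩, rfl⟩
      · exact ⟨(v, u), mem_rootward.2 ⟨huv.symm, h.symm⟩, Sym2.eq_swap⟩

theorem treeWeight_edge_mul [DecidableEq V] (hT : T.IsTree) (W : V → V → ℝ) (f : Sym2 V → ℝ)
    (r : V) :
    treeWeight (fun a b => f s(a, b) * W a b) T r
      = (∏ e ∈ T.edgeFinset, f e) * treeWeight W T r := by
  rw [treeWeight_eq_prod_rootward, treeWeight_eq_prod_rootward, prod_mul_distrib,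
    ← prod_rootward_eq_prod_edgeFinset hT r]
  congr 1
  exact prod_congr rfl fun _ _ => congrArg f Sym2.eq_swap

end TreeWeights

section SteadyState

open SimpleGraph

variable {V : Type*} [Fintype V] [DecidableEq V] {G T : SimpleGraph V}

theorem exists_isPath_treeWeight_mul_walkWeight (W : V → V → ℝ) (hT : IsSpanningTree G T)
    (i j : V) : ∃ p : G.Walk i j, p.IsPath ∧
      treeWeight W T i * walkWeight W p = treeWeight W T j * walkWeight W p.reverse := by
  obtain ⟨p, hp, -⟩ := hT.2.connected.exists_path_of_dist i j
  refine ⟨p.mapLe hT.1, hp.mapLe hT.1, ?_⟩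
  rw [Walk.reverse_mapLe, walkWeight_mapLe, walkWeight_mapLe]
  exact treeWeight_mul_walkWeight W hT.2 p

theorem log_le_Fbtw (W : V → V → ℝ) {i j : V} {p : G.Walk i j} {q : G.Walk j i}
    (hp : p.IsPath) (hq : q.IsPath) :
    log (walkWeight W p * walkWeight W q / (walkWeight W p.reverse * walkWeight W q.reverse))
      ≤ Fbtw W G i j := by
  have hfin := Set.finite_range fun pq : G.Path i j × G.Path j i =>
    |log (walkWeight W pq.1.1 * walkWeight W pq.2.1 /
      (walkWeight W pq.1.1.reverse * walkWeight W pq.2.1.reverse))|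
  refine (le_abs_self _).trans (le_csSup (hfin.bddAbove.mono ?_) ⟨p, q, hp, hq, rfl⟩)
  rintro _ ⟨p, q, hp, hq, rfl⟩
  exact ⟨(⟨p, hp⟩, ⟨q, hq⟩), rfl⟩

/-- The ratio of the two sides is the cycle weight ratio of the path of `T'` from `i` to `j`
followed by the path of `T` back. -/
theorem treeWeight_mul_le_exp_Fbtw {W : V → V → ℝ} (hW : ∀ a b, G.Adj a b → 0 < W a b)
    {T T' : SimpleGraph V} (hT : IsSpanningTree G T) (hT' : IsSpanningTree G T') (i j : V) :
    treeWeight W T i * treeWeight W T' j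
      ≤ exp (Fbtw W G i j) * (treeWeight W T' i * treeWeight W T j) := by
  obtain ⟨p, hp, hpT⟩ := exists_isPath_treeWeight_mul_walkWeight W hT i j
  obtain ⟨p', hp', hpT'⟩ := exists_isPath_treeWeight_mul_walkWeight W hT' i j
  have hw {u v : V} (q : G.Walk u v) : 0 < walkWeight W q := walkWeight_pos hW q
  have hc {T : SimpleGraph V} (hT : IsSpanningTree G T) (k : V) : 0 < treeWeight W T k :=
    treeWeight_pos (fun a b h => hW a b (hT.1 h)) k
  have hR : walkWeight W p' * walkWeight W p.reverse
      / (walkWeight W p'.reverse * walkWeight W p) ≤ exp (Fbtw W G i j) := by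
    have h := log_le_Fbtw W hp' hp.reverse
    rw [Walk.reverse_reverse] at h
    rwa [← exp_le_exp, exp_log (div_pos (mul_pos (hw _) (hw _)) (mul_pos (hw _) (hw _)))] at h
  calc treeWeight W T i * treeWeight W T' j
      = walkWeight W p' * walkWeight W p.reverse / (walkWeight W p'.reverse * walkWeight W p)
          * (treeWeight W T' i * treeWeight W T j) := by
        rw [div_mul_eq_mul_div, eq_div_iff (mul_pos (hw _) (hw _)).ne']
        linear_combination (treeWeight W T' j * walkWeight W p'.reverse) * hpT
          - (treeWeight W T j * walkWeight W p.reverse) * hpT'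
    _ ≤ exp (Fbtw W G i j) * (treeWeight W T' i * treeWeight W T j) :=
        mul_le_mul_of_nonneg_right hR (mul_pos (hc hT' i) (hc hT j)).le

theorem nonempty_spanningTrees (hG : G.Connected) :
    (univ.filter (IsSpanningTree G)).Nonempty := by
  obtain ⟨T, hTG, hT⟩ := hG.exists_isTree_le
  exact ⟨T, mem_filter.2 ⟨mem_univ T, hTG, hT⟩⟩

theorem sumTrees_pos {W : V → V → ℝ} (hG : G.Connected) (hW : ∀ a b, G.Adj a b → 0 < W a b)
    (k : V) : 0 < sumTrees W G k :=
  sum_pos (fun _ hT => treeWeight_pos (fun a b h => hW a b ((mem_filter.1 hT).2.1 h)) k)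
    (nonempty_spanningTrees hG)

theorem log_mttPi_div_mttPi {W : V → V → ℝ} (h : ∀ k, 0 < sumTrees W G k) (i j : V) :
    log (mttPi W G i / mttPi W G j) = log (sumTrees W G i) - log (sumTrees W G j) := by
  have hZ : 0 < ∑ l, sumTrees W G l := sum_pos (fun l _ => h l) ⟨i, mem_univ i⟩
  rw [mttPi, mttPi, div_div_div_cancel_right₀ hZ.ne', log_div (h i).ne' (h j).ne']

theorem card_filter_edgeFinset_le_add (hT : IsSpanningTree G T) {r : ℕ}
    (hr : G.edgeSet.ncard + 1 = r + Fintype.card V) (S : Set (Sym2 V)) :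
    #(G.edgeFinset.filter (· ∈ S)) ≤ #(T.edgeFinset.filter (· ∈ S)) + r := by
  have hsub : T.edgeFinset ⊆ G.edgeFinset := edgeFinset_mono hT.1
  have hcard : #(G.edgeFinset \ T.edgeFinset) = r := by
    have hT := hT.2.card_edgeFinset
    rw [← coe_edgeFinset, Set.ncard_coe_finset] at hr
    rw [card_sdiff_of_subset hsub]
    omega
  calc #(G.edgeFinset.filter (· ∈ S))
      ≤ #(T.edgeFinset.filter (· ∈ S) ∪ (G.edgeFinset \ T.edgeFinset)) := by
        refine card_le_card fun e he => ?_
        simp only [mem_filter, mem_union, mem_sdiff] at he ⊢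
        tauto
    _ ≤ #(T.edgeFinset.filter (· ∈ S)) + r := hcard ▸ card_union_le _ _

end SteadyState

section Rates

variable {V : Type*}

theorem rates_pos (G : SimpleGraph V) (Bp : V → V → ℝ) (Ep : V → ℝ) (Fp : V → V → ℝ) {a b : V}
    (h : G.Adj a b) : 0 < rates G Bp Ep Fp a b := by
  simp only [rates, if_pos h]
  exact exp_pos _

theorem rates_updBadd (G : SimpleGraph V) (Bp : V → V → ℝ) (Ep : V → ℝ) (Fp : V → V → ℝ)
    (S : Set (Sym2 V)) (t : ℝ) (a b : V) :
    rates G (updBadd Bp S t) Ep Fp a b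
      = exp (-(if s(a, b) ∈ S then t else 0)) * rates G Bp Ep Fp a b := by
  by_cases hab : G.Adj a b
  · simp only [rates, updBadd, if_pos hab, ← exp_add]
    congr 1
    split_ifs <;> ring
  · simp [rates, hab]

variable [Fintype V] [DecidableEq V] {G T : SimpleGraph V}

theorem treeWeight_rates_updBadd (hT : T.IsTree) (Bp : V → V → ℝ) (Ep : V → ℝ)
    (Fp : V → V → ℝ) (S : Set (Sym2 V)) (t : ℝ) (k : V) :
    treeWeight (rates G (updBadd Bp S t) Ep Fp) T k
      = exp (-(t * #(T.edgeFinset.filter (· ∈ S)))) * treeWeight (rates G Bp Ep Fp) T k := by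
  have h := treeWeight_edge_mul hT (rates G Bp Ep Fp)
    (fun e => exp (-(if e ∈ S then t else 0))) k
  rw [funext₂ (rates_updBadd G Bp Ep Fp S t), h, ← exp_sum, sum_neg_distrib,
    ← sum_filter, sum_const, nsmul_eq_mul, mul_comm t]

theorem sumTrees_rates_updBadd (Bp : V → V → ℝ) (Ep : V → ℝ) (Fp : V → V → ℝ)
    (S : Set (Sym2 V)) (t : ℝ) (k : V) :
    sumTrees (rates G (updBadd Bp S t) Ep Fp) G k
      = ∑ T ∈ univ.filter (IsSpanningTree G),
          exp (-(t * #(T.edgeFinset.filter (· ∈ S)))) * treeWeight (rates G Bp Ep Fp) T k :=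
  sum_congr rfl fun _ hT => treeWeight_rates_updBadd (mem_filter.1 hT).2.2 Bp Ep Fp S t k

theorem log_piP_div_piP (hG : G.Connected) (Bp : V → V → ℝ) (Ep : V → ℝ) (Fp : V → V → ℝ)
    (i j : V) :
    log (piP G Bp Ep Fp i / piP G Bp Ep Fp j)
      = log (sumTrees (rates G Bp Ep Fp) G i) - log (sumTrees (rates G Bp Ep Fp) G j) :=
  log_mttPi_div_mttPi (sumTrees_pos hG fun _ _ => rates_pos G Bp Ep Fp) i j

theorem hasDerivAt_log_sumTrees_rates_updBadd (hG : G.Connected) (Bp : V → V → ℝ)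
    (Ep : V → ℝ) (Fp : V → V → ℝ) (S : Set (Sym2 V)) (k : V) :
    HasDerivAt (fun t => log (sumTrees (rates G (updBadd Bp S t) Ep Fp) G k))
      (-(∑ T ∈ univ.filter (IsSpanningTree G),
          treeWeight (rates G Bp Ep Fp) T k * #(T.edgeFinset.filter (· ∈ S)))
        / ∑ T ∈ univ.filter (IsSpanningTree G), treeWeight (rates G Bp Ep Fp) T k) 0 := by
  simpa only [sumTrees_rates_updBadd] using hasDerivAt_log_sum_exp_mul (nonempty_spanningTrees hG)
    fun T hT => treeWeight_pos (fun a b h => rates_pos G Bp Ep Fp ((mem_filter.1 hT).2.1 h)) k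

end Rates

theorem stmt11_general {V : Type*} [Fintype V] [DecidableEq V]
    (G : SimpleGraph V) (hG : G.Connected)
    (Bp : V → V → ℝ) (Ep : V → ℝ) (Fp : V → V → ℝ)
    (r : ℕ) (hr : G.edgeSet.ncard + 1 = r + Fintype.card V)
    (S : Set (Sym2 V))
    (i j : V) :
    |deriv (fun t =>
        Real.log (piP G (updBadd Bp S t) Ep Fp i /
                  piP G (updBadd Bp S t) Ep Fp j)) 0|
      ≤ (r : ℝ) * Real.tanh (Fbtw (rates G Bp Ep Fp) G i j / 4) := by
  set W := rates G Bp Ep Fp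
  have hW : ∀ a b, G.Adj a b → 0 < W a b := fun _ _ => rates_pos G Bp Ep Fp
  have hspan {T : SimpleGraph V} (hT : T ∈ univ.filter (IsSpanningTree G)) :
      IsSpanningTree G T := (mem_filter.1 hT).2
  have hc (k : V) : ∀ T ∈ univ.filter (IsSpanningTree G), 0 < treeWeight W T k :=
    fun T hT => treeWeight_pos (fun a b h => hW a b ((hspan hT).1 h)) k
  rw [funext fun t => log_piP_div_piP hG (updBadd Bp S t) Ep Fp i j,
    ((hasDerivAt_log_sumTrees_rates_updBadd hG Bp Ep Fp S i).fun_sub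
      (hasDerivAt_log_sumTrees_rates_updBadd hG Bp Ep Fp S j)).deriv,
    neg_div, neg_div, neg_sub_neg]
  refine abs_sum_div_sub_sum_div_le (lo := #(G.edgeFinset.filter (· ∈ S)) - r)
    (nonempty_spanningTrees hG) (hc i) (hc j)
    (fun T hT T' hT' => treeWeight_mul_le_exp_Fbtw hW (hspan hT) (hspan hT') i j) fun T hT => ?_
  have h₁ := card_filter_edgeFinset_le_add (hspan hT) hr S
  have h₂ := card_le_card (filter_subset_filter (· ∈ S) (SimpleGraph.edgeFinset_mono (hspan hT).1))
  rw [sub_le_iff_le_add, sub_add_cancel]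
  exact ⟨by exact_mod_cast h₁, by exact_mod_cast h₂⟩

/-- if the connected graph `G` has `r` independent cycles
(`r = |E| - |V| + 1`), then for any set `S` of edges,
`|∑_{{m,n}∈S} ∂ln(π_i/π_j)/∂B_mn| ≤ r tanh(F_{i↔j}/4)`. -/
theorem stmt11 {V : Type*} [Fintype V] [DecidableEq V]
    (G : SimpleGraph V) (hG : G.Connected)
    (Bp : V → V → ℝ) (Ep : V → ℝ) (Fp : V → V → ℝ)
    (hB : ∀ i j, Bp i j = Bp j i) (hF : ∀ i j, Fp i j = -Fp j i)
    (r : ℕ) (hr : G.edgeSet.ncard + 1 = r + Fintype.card V)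
    (S : Set (Sym2 V)) (hS : S ⊆ G.edgeSet)
    (i j : V) :
    |deriv (fun t =>
        Real.log (piP G (updBadd Bp S t) Ep Fp i /
                  piP G (updBadd Bp S t) Ep Fp j)) 0|
      ≤ (r : ℝ) * Real.tanh (Fbtw (rates G Bp Ep Fp) G i j / 4) :=
  stmt11_general G hG Bp Ep Fp r hr S i j
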